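/- The function d_W(g₁,g₂) = 1 − v₁₂ᵢ / (v₁ + v₂ − v₁₂ᵢ) is a metric on the set of finite graphs with isomorphic graphs identified (excluding degenerate division by zero by setting d_W to 0 when both graphs are empty), where v₁ and v₂ are the numbers of vertices of g₁ and g₂ and v₁₂ᵢ is the maximum number of vertices of a graph that is induced subgraph isomorphic to both g₁ and g₂. -/
import Mathlib


/-- A finite labeled graph with vertex labels in `LV` and edge labels in `LE`.
Vertices are drawn from `ℕ`; label functions are total on `ℕ` resp. `Sym2 ℕ`
(only the values on actual vertices and edges are relevant). -/
structure LGraph (LV LE : Type) where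
  verts : Finset ℕ
  edges : Finset (Sym2 ℕ)
  edges_sub : ∀ e ∈ edges, ∀ v ∈ e, v ∈ verts
  edges_nodiag : ∀ e ∈ edges, ¬ e.IsDiag
  ℓV : ℕ → LV
  ℓE : Sym2 ℕ → LE

/-- Label-preserving isomorphism of labeled graphs. -/
def LGraph.Iso {LV LE : Type} (g₁ g₂ : LGraph LV LE) : Prop :=
  ∃ φ : ℕ → ℕ,
    Set.BijOn φ ↑g₁.verts ↑g₂.verts ∧
    (∀ u ∈ g₁.verts, ∀ v ∈ g₁.verts, (s(u, v) ∈ g₁.edges ↔ s(φ u, φ v) ∈ g₂.edges)) ∧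
    (∀ v ∈ g₁.verts, g₂.ℓV (φ v) = g₁.ℓV v) ∧
    (∀ u ∈ g₁.verts, ∀ v ∈ g₁.verts, s(u, v) ∈ g₁.edges →
      g₂.ℓE s(φ u, φ v) = g₁.ℓE s(u, v))

/-- `g'` is an induced subgraph of `g`: `V' ⊆ V`, `E' = E ∩ [V']²`, with
agreeing labels. -/
def LGraph.IsInducedSubgraph {LV LE : Type} (g' g : LGraph LV LE) : Prop :=
  g'.verts ⊆ g.verts ∧
  (∀ e : Sym2 ℕ, e ∈ g'.edges ↔ (e ∈ g.edges ∧ ∀ v ∈ e, v ∈ g'.verts)) ∧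
  (∀ v ∈ g'.verts, g'.ℓV v = g.ℓV v) ∧
  (∀ e ∈ g'.edges, g'.ℓE e = g.ℓE e)

/-- `g ⊆ᵢ h` (induced subgraph isomorphism): some induced subgraph of `h` is
isomorphic to `g`. -/
def LGraph.IndSubIso {LV LE : Type} (g h : LGraph LV LE) : Prop :=
  ∃ g'' : LGraph LV LE, LGraph.IsInducedSubgraph g'' h ∧ LGraph.Iso g'' g

/-- `v₁₂ᵢ` : the maximum number of vertices of a graph that is induced
subgraph isomorphic to both `g₁` and `g₂`. -/
noncomputable def v12i {LV LE : Type} (g₁ g₂ : LGraph LV LE) : ℕ :=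
  sSup {k : ℕ | ∃ h : LGraph LV LE,
    h.IndSubIso g₁ ∧ h.IndSubIso g₂ ∧ h.verts.card = k}

/-- Wallis et al.'s distance
`d_W(g₁,g₂) = 1 − v₁₂ᵢ / (v₁ + v₂ − v₁₂ᵢ)` (set to `0` when both graphs are
empty, to avoid division by zero). -/
noncomputable def dW {LV LE : Type} (g₁ g₂ : LGraph LV LE) : ℝ :=
  if g₁.verts = ∅ ∧ g₂.verts = ∅ then 0
  else 1 - (v12i g₁ g₂ : ℝ) /
    ((g₁.verts.card : ℝ) + (g₂.verts.card : ℝ) - (v12i g₁ g₂ : ℝ))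

namespace LGraph
open scoped Classical
variable {LV LE : Type}

lemma Iso.refl (g : LGraph LV LE) : g.Iso g :=
  ⟨id, Set.bijOn_id _, fun _ _ _ _ => Iff.rfl, fun _ _ => rfl, fun _ _ _ _ _ => rfl⟩

lemma Iso.card_eq {g₁ g₂ : LGraph LV LE} (h : g₁.Iso g₂) :
    g₁.verts.card = g₂.verts.card := by
  obtain ⟨φ, hb, -, -, -⟩ := h
  exact Finset.card_bij (fun a _ => φ a) (fun a ha => hb.1 ha)
    (fun a ha a' ha' hh => hb.2.1 ha ha' hh)
    (fun b hb' => by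
      obtain ⟨a, ha, rfl⟩ := hb.2.2 hb'
      exact ⟨a, ha, rfl⟩)

lemma Iso.symm {g₁ g₂ : LGraph LV LE} (h : g₁.Iso g₂) : g₂.Iso g₁ := by
  obtain ⟨φ, hb, he, hv, hl⟩ := h
  have hinv : Set.InvOn (Function.invFunOn φ ↑g₁.verts) φ ↑g₁.verts ↑g₂.verts :=
    hb.invOn_invFunOn
  set ψ := Function.invFunOn φ ↑g₁.verts with hψ
  have hbψ : Set.BijOn ψ ↑g₂.verts ↑g₁.verts := Set.BijOn.symm hinv.symm hb
  have hmem : ∀ v ∈ g₂.verts, ψ v ∈ g₁.verts := fun v hv' => hbψ.1 hv'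
  have hfψ : ∀ v ∈ g₂.verts, φ (ψ v) = v := fun v hv' => hinv.2 hv'
  refine ⟨ψ, hbψ, ?_, ?_, ?_⟩
  · intro u hu v hv'
    have := he (ψ u) (hmem u hu) (ψ v) (hmem v hv')
    rw [hfψ u hu, hfψ v hv'] at this
    exact this.symm
  · intro v hv'
    have := hv (ψ v) (hmem v hv')
    rw [hfψ v hv'] at this
    exact this.symm
  · intro u hu v hv' hedge
    have hedge' : s(ψ u, ψ v) ∈ g₁.edges := by
      have := he (ψ u) (hmem u hu) (ψ v) (hmem v hv')
      rw [hfψ u hu, hfψ v hv'] at this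
      exact this.mpr hedge
    have := hl (ψ u) (hmem u hu) (ψ v) (hmem v hv') hedge'
    rw [hfψ u hu, hfψ v hv'] at this
    exact this.symm

lemma Iso.trans {g₁ g₂ g₃ : LGraph LV LE} (h : g₁.Iso g₂) (h' : g₂.Iso g₃) :
    g₁.Iso g₃ := by
  obtain ⟨φ, hb, he, hv, hl⟩ := h
  obtain ⟨φ', hb', he', hv', hl'⟩ := h'
  have hmem : ∀ v ∈ g₁.verts, φ v ∈ g₂.verts := fun v hv' => hb.1 hv'
  refine ⟨φ' ∘ φ, hb'.comp hb, ?_, ?_, ?_⟩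
  · intro u hu v hvv
    exact (he u hu v hvv).trans (he' (φ u) (hmem u hu) (φ v) (hmem v hvv))
  · intro v hvv
    exact (hv' (φ v) (hmem v hvv)).trans (hv v hvv)
  · intro u hu v hvv hedge
    have h2 : s(φ u, φ v) ∈ g₂.edges := (he u hu v hvv).mp hedge
    exact (hl' (φ u) (hmem u hu) (φ v) (hmem v hvv) h2).trans (hl u hu v hvv hedge)


/-- The induced subgraph of `g` on vertex set `S` (intersected with `g.verts`). -/
noncomputable def restrict (g : LGraph LV LE) (S : Finset ℕ) : LGraph LV LE where
  verts := S ∩ g.verts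
  edges := g.edges.filter fun e => ∀ v ∈ e, v ∈ S
  edges_sub := fun e he v hv => by
    rw [Finset.mem_filter] at he
    exact Finset.mem_inter.2 ⟨he.2 v hv, g.edges_sub e he.1 v hv⟩
  edges_nodiag := fun e he => g.edges_nodiag e (Finset.mem_filter.1 he).1
  ℓV := g.ℓV
  ℓE := g.ℓE

lemma restrict_isInduced (g : LGraph LV LE) (S : Finset ℕ) :
    (g.restrict S).IsInducedSubgraph g := by
  refine ⟨Finset.inter_subset_right, ?_, fun _ _ => rfl, fun _ _ => rfl⟩
  intro e
  simp only [restrict, Finset.mem_filter, Finset.mem_inter]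
  constructor
  · rintro ⟨he, hS⟩
    exact ⟨he, fun v hv => ⟨hS v hv, g.edges_sub e he v hv⟩⟩
  · rintro ⟨he, hS⟩
    exact ⟨he, fun v hv => (hS v hv).1⟩

lemma IsInducedSubgraph.trans {g₁ g₂ g₃ : LGraph LV LE}
    (h : g₁.IsInducedSubgraph g₂) (h' : g₂.IsInducedSubgraph g₃) :
    g₁.IsInducedSubgraph g₃ := by
  obtain ⟨hs, he, hv, hl⟩ := h
  obtain ⟨hs', he', hv', hl'⟩ := h'
  refine ⟨hs.trans hs', ?_, ?_, ?_⟩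
  · intro e
    rw [he e, he' e]
    constructor
    · rintro ⟨⟨h1, h2⟩, h3⟩; exact ⟨h1, h3⟩
    · rintro ⟨h1, h3⟩; exact ⟨⟨h1, fun v hv => hs (h3 v hv)⟩, h3⟩
  · intro v hvv
    rw [hv v hvv, hv' v (hs hvv)]
  · intro e hee
    rw [hl e hee, hl' e ((he e).1 hee).1]

lemma IsInducedSubgraph.indSubIso {g' g : LGraph LV LE}
    (h : g'.IsInducedSubgraph g) : g'.IndSubIso g :=
  ⟨g', h, Iso.refl g'⟩

lemma IndSubIso.congr {h h' g : LGraph LV LE} (hi : h.Iso h')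
    (hh : h.IndSubIso g) : h'.IndSubIso g := by
  obtain ⟨g'', hind, hiso⟩ := hh
  exact ⟨g'', hind, hiso.trans hi⟩

lemma IndSubIso.card_le {h g : LGraph LV LE} (hh : h.IndSubIso g) :
    h.verts.card ≤ g.verts.card := by
  obtain ⟨g'', hind, hiso⟩ := hh
  rw [← hiso.card_eq]
  exact Finset.card_le_card hind.1

lemma IndSubIso.trans {h g k : LGraph LV LE} (h1 : h.IndSubIso g)
    (h2 : g.IndSubIso k) : h.IndSubIso k := by
  obtain ⟨h'', hind, hiso⟩ := h1
  obtain ⟨g'', gind, giso⟩ := h2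
  obtain ⟨ψ, gb, ge, gv, gl⟩ := giso
  set T : Finset ℕ := g''.verts.filter (fun v => ψ v ∈ h''.verts) with hT
  have hmemT : ∀ v, v ∈ (g''.restrict T).verts ↔ (v ∈ g''.verts ∧ ψ v ∈ h''.verts) := by
    intro v
    simp only [restrict, Finset.mem_inter, hT, Finset.mem_filter]
    tauto
  have hmemE : ∀ e, e ∈ (g''.restrict T).edges ↔ (e ∈ g''.edges ∧ ∀ v ∈ e, v ∈ T) := by
    intro e; simp only [restrict, Finset.mem_filter]
  refine ⟨g''.restrict T, (restrict_isInduced g'' T).trans gind, Iso.trans ?_ hiso⟩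
  refine ⟨ψ, ⟨?_, ?_, ?_⟩, ?_, ?_, ?_⟩
  · intro v hv
    exact ((hmemT v).1 hv).2
  · intro u hu v hv huv
    exact gb.2.1 (((hmemT u).1 hu).1) (((hmemT v).1 hv).1) huv
  · intro w hw
    obtain ⟨v, hv, rfl⟩ := gb.2.2 (hind.1 hw)
    exact ⟨v, (hmemT v).2 ⟨hv, hw⟩, rfl⟩
  · intro u hu v hv
    obtain ⟨hu1, hu2⟩ := (hmemT u).1 hu
    obtain ⟨hv1, hv2⟩ := (hmemT v).1 hv
    rw [hmemE, (hind.2.1 _)]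
    constructor
    · rintro ⟨he, -⟩
      refine ⟨(ge u hu1 v hv1).1 he, ?_⟩
      intro w hw
      rw [Sym2.mem_iff] at hw
      rcases hw with rfl | rfl
      exacts [hu2, hv2]
    · rintro ⟨he, -⟩
      refine ⟨(ge u hu1 v hv1).2 he, ?_⟩
      intro w hw
      rw [Sym2.mem_iff] at hw
      rcases hw with rfl | rfl
      · exact Finset.mem_filter.2 ⟨hu1, hu2⟩
      · exact Finset.mem_filter.2 ⟨hv1, hv2⟩
  · intro v hv
    obtain ⟨hv1, hv2⟩ := (hmemT v).1 hv
    have e1 : h''.ℓV (ψ v) = g.ℓV (ψ v) := hind.2.2.1 _ hv2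
    have e2 : g.ℓV (ψ v) = g''.ℓV v := gv v hv1
    exact e1.trans e2
  · intro u hu v hv he
    obtain ⟨hu1, hu2⟩ := (hmemT u).1 hu
    obtain ⟨hv1, hv2⟩ := (hmemT v).1 hv
    have he' : s(u, v) ∈ g''.edges := ((hmemE _).1 he).1
    have heh : s(ψ u, ψ v) ∈ h''.edges := by
      rw [hind.2.1 _]
      refine ⟨(ge u hu1 v hv1).1 he', ?_⟩
      intro w hw
      rw [Sym2.mem_iff] at hw
      rcases hw with rfl | rfl
      exacts [hu2, hv2]
    have e1 : h''.ℓE s(ψ u, ψ v) = g.ℓE s(ψ u, ψ v) := hind.2.2.2 _ heh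
    have e2 : g.ℓE s(ψ u, ψ v) = g''.ℓE s(u, v) := gl u hu1 v hv1 he'
    exact e1.trans e2

lemma IsInducedSubgraph.refl (g : LGraph LV LE) : g.IsInducedSubgraph g :=
  ⟨Finset.Subset.refl _, fun e => ⟨fun he => ⟨he, g.edges_sub e he⟩, fun he => he.1⟩,
    fun _ _ => rfl, fun _ _ => rfl⟩

lemma edges_eq_empty {g : LGraph LV LE} (h : g.verts = ∅) : g.edges = ∅ := by
  rw [Finset.eq_empty_iff_forall_notMem]
  intro e he
  induction e with
  | _ x y =>
    have := g.edges_sub _ he x (Sym2.mem_mk_left x y)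
    rw [h] at this
    exact absurd this (Finset.notMem_empty x)

lemma iso_of_empty {g₁ g₂ : LGraph LV LE} (h1 : g₁.verts = ∅) (h2 : g₂.verts = ∅) :
    g₁.Iso g₂ := by
  refine ⟨id, ?_, ?_, ?_, ?_⟩
  · rw [h1, h2]; simp
  · intro u hu; rw [h1] at hu; exact absurd hu (Finset.notMem_empty u)
  · intro v hv; rw [h1] at hv; exact absurd hv (Finset.notMem_empty v)
  · intro u hu; rw [h1] at hu; exact absurd hu (Finset.notMem_empty u)

lemma restrict_empty_verts (g : LGraph LV LE) : (g.restrict ∅).verts = ∅ := by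
  simp [restrict]

lemma restrict_indSubIso_of_empty (g g' : LGraph LV LE) :
    (g.restrict ∅).IndSubIso g' :=
  ⟨g'.restrict ∅, restrict_isInduced g' ∅,
    iso_of_empty (restrict_empty_verts g') (restrict_empty_verts g)⟩

lemma v12i_set_nonempty (g₁ g₂ : LGraph LV LE) :
    {k : ℕ | ∃ h : LGraph LV LE,
      h.IndSubIso g₁ ∧ h.IndSubIso g₂ ∧ h.verts.card = k}.Nonempty :=
  ⟨0, g₁.restrict ∅, restrict_indSubIso_of_empty g₁ g₁,
    restrict_indSubIso_of_empty g₁ g₂, by rw [restrict_empty_verts]; rfl⟩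

lemma v12i_set_bdd (g₁ g₂ : LGraph LV LE) :
    BddAbove {k : ℕ | ∃ h : LGraph LV LE,
      h.IndSubIso g₁ ∧ h.IndSubIso g₂ ∧ h.verts.card = k} := by
  refine ⟨g₁.verts.card, ?_⟩
  rintro k ⟨h, h1, -, rfl⟩
  exact h1.card_le

lemma exists_v12i (g₁ g₂ : LGraph LV LE) :
    ∃ h : LGraph LV LE, h.IndSubIso g₁ ∧ h.IndSubIso g₂ ∧
      h.verts.card = v12i g₁ g₂ :=
  Nat.sSup_mem (v12i_set_nonempty g₁ g₂) (v12i_set_bdd g₁ g₂)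

lemma le_v12i {g₁ g₂ h : LGraph LV LE} (h1 : h.IndSubIso g₁) (h2 : h.IndSubIso g₂) :
    h.verts.card ≤ v12i g₁ g₂ :=
  le_csSup (v12i_set_bdd g₁ g₂) ⟨h, h1, h2, rfl⟩

lemma v12i_le_left (g₁ g₂ : LGraph LV LE) : v12i g₁ g₂ ≤ g₁.verts.card := by
  obtain ⟨h, h1, -, hc⟩ := exists_v12i g₁ g₂
  rw [← hc]; exact h1.card_le

lemma v12i_le_right (g₁ g₂ : LGraph LV LE) : v12i g₁ g₂ ≤ g₂.verts.card := by
  obtain ⟨h, -, h2, hc⟩ := exists_v12i g₁ g₂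
  rw [← hc]; exact h2.card_le

lemma v12i_comm (g₁ g₂ : LGraph LV LE) : v12i g₁ g₂ = v12i g₂ g₁ := by
  unfold v12i
  congr 1
  ext k
  exact ⟨fun ⟨h, a, b, c⟩ => ⟨h, b, a, c⟩, fun ⟨h, a, b, c⟩ => ⟨h, b, a, c⟩⟩

lemma v12i_of_iso {g₁ g₂ : LGraph LV LE} (h : g₁.Iso g₂) :
    v12i g₁ g₂ = g₁.verts.card := by
  refine le_antisymm (v12i_le_left g₁ g₂) ?_
  exact le_v12i ⟨g₁, IsInducedSubgraph.refl g₁, Iso.refl g₁⟩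
    ⟨g₂, IsInducedSubgraph.refl g₂, h.symm⟩

lemma iso_of_induced_card {g' g : LGraph LV LE} (h : g'.IsInducedSubgraph g)
    (hc : g.verts.card ≤ g'.verts.card) : g'.Iso g := by
  have hv : g'.verts = g.verts := Finset.eq_of_subset_of_card_le h.1 hc
  refine ⟨id, by rw [hv]; exact Set.bijOn_id _, ?_, ?_, ?_⟩
  · intro u hu v hvv
    simp only [id]
    rw [h.2.1]
    constructor
    · exact fun he => he.1
    · intro he
      refine ⟨he, ?_⟩
      intro w hw
      rw [hv]
      exact g.edges_sub _ he w hw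
  · intro v hvv; exact (h.2.2.1 v hvv).symm
  · intro u hu v hvv he; exact (h.2.2.2 _ he).symm

lemma restrict_induced_of_subset {g a : LGraph LV LE} (aind : a.IsInducedSubgraph g)
    {S : Finset ℕ} (hS : S ⊆ a.verts) : (g.restrict S).IsInducedSubgraph a := by
  have hmemE : ∀ e, e ∈ (g.restrict S).edges ↔ (e ∈ g.edges ∧ ∀ v ∈ e, v ∈ S) := by
    intro e; simp only [restrict, Finset.mem_filter]
  have hverts : (g.restrict S).verts = S := by
    simp only [restrict]
    exact Finset.inter_eq_left.2 (hS.trans aind.1)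
  refine ⟨?_, ?_, ?_, ?_⟩
  · rw [hverts]; exact hS
  · intro e
    rw [hmemE, aind.2.1, hverts]
    constructor
    · rintro ⟨he, hs⟩
      exact ⟨⟨he, fun v hv => hS (hs v hv)⟩, hs⟩
    · rintro ⟨⟨he, -⟩, hs⟩
      exact ⟨he, hs⟩
  · intro v hvv
    rw [hverts] at hvv
    exact (aind.2.2.1 v (hS hvv)).symm
  · intro e he
    have : e ∈ a.edges := by
      rw [aind.2.1]
      obtain ⟨h1, h2⟩ := (hmemE e).1 he
      exact ⟨h1, fun v hv => hS (h2 v hv)⟩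
    exact (aind.2.2.2 e this).symm

lemma v12i_key (g₁ g₂ g₃ : LGraph LV LE) :
    v12i g₁ g₂ + v12i g₂ g₃ ≤ g₂.verts.card + v12i g₁ g₃ := by
  obtain ⟨h12, h121, h122, hc12⟩ := exists_v12i g₁ g₂
  obtain ⟨h23, h232, h233, hc23⟩ := exists_v12i g₂ g₃
  obtain ⟨a, aind, aiso⟩ := h122
  obtain ⟨b, bind, biso⟩ := h232
  set S := a.verts ∩ b.verts with hS
  have hSa : S ⊆ a.verts := Finset.inter_subset_left
  have hSb : S ⊆ b.verts := Finset.inter_subset_right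
  have hcia : (g₂.restrict S).IndSubIso g₁ :=
    IndSubIso.trans (restrict_induced_of_subset aind hSa).indSubIso
      (IndSubIso.congr aiso.symm h121)
  have hcib : (g₂.restrict S).IndSubIso g₃ :=
    IndSubIso.trans (restrict_induced_of_subset bind hSb).indSubIso
      (IndSubIso.congr biso.symm h233)
  have hcard : (g₂.restrict S).verts.card = S.card := by
    simp only [restrict]
    rw [Finset.inter_eq_left.2 (hSa.trans aind.1)]
  have hle : S.card ≤ v12i g₁ g₃ := hcard ▸ le_v12i hcia hcib
  have hunion : (a.verts ∪ b.verts).card ≤ g₂.verts.card :=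
    Finset.card_le_card (Finset.union_subset aind.1 bind.1)
  have hquad : a.verts.card + b.verts.card
      = (a.verts ∪ b.verts).card + S.card := by
    rw [hS]; exact (Finset.card_union_add_card_inter _ _).symm
  have ha : a.verts.card = v12i g₁ g₂ := by rw [aiso.card_eq, hc12]
  have hb : b.verts.card = v12i g₂ g₃ := by rw [biso.card_eq, hc23]
  omega

end LGraph

private lemma tri_real (a b c x y z : ℝ) (hx0 : 0 ≤ x) (hy0 : 0 ≤ y)
    (hx1 : x ≤ a) (hx2 : x ≤ b) (hy1 : y ≤ b) (hy2 : y ≤ c)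
    (hkey : x + y ≤ b + z)
    (hB : 0 < a + b - x) (hC : 0 < b + c - y) (hA : 0 < a + c - z) :
    1 - z/(a+c-z) ≤ (1 - x/(a+b-x)) + (1 - y/(b+c-y)) := by
  have hA2 : 0 < a + c - (x + y - b) := by linarith
  have h4 : (a+b-2*x)/(a+c-(x+y-b)) ≤ (a+b-2*x)/(a+b-x) :=
    div_le_div_of_nonneg_left (by linarith) hB (by linarith)
  have h5 : (b+c-2*y)/(a+c-(x+y-b)) ≤ (b+c-2*y)/(b+c-y) :=
    div_le_div_of_nonneg_left (by linarith) hC (by linarith)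
  have h3 : (x+y-b)/(a+c-(x+y-b)) ≤ z/(a+c-z) := by
    rw [div_le_div_iff₀ hA2 hA]
    nlinarith [mul_le_mul_of_nonneg_right hkey (show (0:ℝ) ≤ a + c by linarith)]
  have h4' : 1 - x/(a+b-x) = (a+b-2*x)/(a+b-x) := by field_simp; ring
  have h5' : 1 - y/(b+c-y) = (b+c-2*y)/(b+c-y) := by field_simp; ring
  have hsum : (a+b-2*x)/(a+c-(x+y-b)) + (b+c-2*y)/(a+c-(x+y-b))
      + (x+y-b)/(a+c-(x+y-b)) = 1 := by
    field_simp
    ring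
  linarith

/-- `d_W` is a metric on the set of finite graphs with
isomorphic graphs identified: nonnegative, vanishing on isomorphic pairs
(in particular `d_W(g,g) = 0`), symmetric, satisfying the triangle
inequality, and separating points up to isomorphism. -/
theorem dW_is_metric (LV LE : Type) :
    (∀ g₁ g₂ : LGraph LV LE, 0 ≤ dW g₁ g₂) ∧
    (∀ g : LGraph LV LE, dW g g = 0) ∧
    (∀ g₁ g₂ : LGraph LV LE, g₁.Iso g₂ → dW g₁ g₂ = 0) ∧
    (∀ g₁ g₂ : LGraph LV LE, dW g₁ g₂ = dW g₂ g₁) ∧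
    (∀ g₁ g₂ g₃ : LGraph LV LE, dW g₁ g₃ ≤ dW g₁ g₂ + dW g₂ g₃) ∧
    (∀ g₁ g₂ : LGraph LV LE, dW g₁ g₂ = 0 → g₁.Iso g₂) := by
  -- basic cast facts
  have hcards : ∀ g₁ g₂ : LGraph LV LE, ¬(g₁.verts = ∅ ∧ g₂.verts = ∅) →
      (1 : ℝ) ≤ (g₁.verts.card : ℝ) + (g₂.verts.card : ℝ) := by
    intro g₁ g₂ h
    have : 1 ≤ g₁.verts.card + g₂.verts.card := by
      by_contra hc
      push_neg at hc
      have h1 : g₁.verts.card = 0 ∧ g₂.verts.card = 0 := by omega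
      exact h ⟨Finset.card_eq_zero.1 h1.1, Finset.card_eq_zero.1 h1.2⟩
    exact_mod_cast this
  have hle1 : ∀ g₁ g₂ : LGraph LV LE,
      (v12i g₁ g₂ : ℝ) ≤ (g₁.verts.card : ℝ) := by
    intro g₁ g₂; exact_mod_cast LGraph.v12i_le_left g₁ g₂
  have hle2 : ∀ g₁ g₂ : LGraph LV LE,
      (v12i g₁ g₂ : ℝ) ≤ (g₂.verts.card : ℝ) := by
    intro g₁ g₂; exact_mod_cast LGraph.v12i_le_right g₁ g₂
  have hden : ∀ g₁ g₂ : LGraph LV LE, ¬(g₁.verts = ∅ ∧ g₂.verts = ∅) →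
      (0 : ℝ) < (g₁.verts.card : ℝ) + (g₂.verts.card : ℝ) - (v12i g₁ g₂ : ℝ) := by
    intro g₁ g₂ h
    have := hcards g₁ g₂ h
    have h1 := hle1 g₁ g₂
    have h2 := hle2 g₁ g₂
    linarith
  have hnn : ∀ g₁ g₂ : LGraph LV LE, 0 ≤ dW g₁ g₂ := by
    intro g₁ g₂
    rw [dW]
    split_ifs with h
    · exact le_refl 0
    · have hd := hden g₁ g₂ h
      have h1 := hle1 g₁ g₂
      have h2 := hle2 g₁ g₂
      have hk0 : (0:ℝ) ≤ (v12i g₁ g₂ : ℝ) := Nat.cast_nonneg _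
      have : (v12i g₁ g₂ : ℝ) /
          ((g₁.verts.card : ℝ) + (g₂.verts.card : ℝ) - (v12i g₁ g₂ : ℝ)) ≤ 1 :=
        (div_le_one hd).2 (by linarith)
      linarith
  have hiso0 : ∀ g₁ g₂ : LGraph LV LE, g₁.Iso g₂ → dW g₁ g₂ = 0 := by
    intro g₁ g₂ hiso
    rw [dW]
    split_ifs with h
    · rfl
    · have hv : v12i g₁ g₂ = g₁.verts.card := LGraph.v12i_of_iso hiso
      have hce : g₁.verts.card = g₂.verts.card := hiso.card_eq
      have hne : g₁.verts.card ≠ 0 := by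
        intro hc
        exact h ⟨Finset.card_eq_zero.1 hc, Finset.card_eq_zero.1 (hce ▸ hc)⟩
      rw [hv, ← hce]
      have hcast : ((g₁.verts.card : ℝ) + (g₁.verts.card : ℝ) - (g₁.verts.card : ℝ))
          = (g₁.verts.card : ℝ) := by ring
      rw [hcast, div_self (by exact_mod_cast hne)]
      ring
  refine ⟨hnn, fun g => hiso0 g g (LGraph.Iso.refl g), hiso0, ?_, ?_, ?_⟩
  · -- symmetry
    intro g₁ g₂
    rw [dW, dW, LGraph.v12i_comm g₂ g₁]
    have hcomm : ((g₂.verts.card : ℝ) + (g₁.verts.card : ℝ))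
        = ((g₁.verts.card : ℝ) + (g₂.verts.card : ℝ)) := by ring
    split_ifs with h1 h2 h2
    · rfl
    · exact absurd ⟨h1.2, h1.1⟩ h2
    · exact absurd ⟨h2.2, h2.1⟩ h1
    · rw [hcomm]
  · -- triangle inequality
    intro g₁ g₂ g₃
    by_cases h13 : g₁.verts = ∅ ∧ g₃.verts = ∅
    · have : dW g₁ g₃ = 0 := by rw [dW, if_pos h13]
      rw [this]
      have := hnn g₁ g₂
      have := hnn g₂ g₃
      linarith
    · by_cases h12 : g₁.verts = ∅ ∧ g₂.verts = ∅
      · -- g₁, g₂ empty, g₃ nonempty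
        have hc1 : g₁.verts.card = 0 := by rw [h12.1]; rfl
        have hc2 : g₂.verts.card = 0 := by rw [h12.2]; rfl
        have hy : v12i g₂ g₃ = 0 :=
          Nat.le_zero.1 (hc2 ▸ LGraph.v12i_le_left g₂ g₃)
        have hz : v12i g₁ g₃ = 0 :=
          Nat.le_zero.1 (hc1 ▸ LGraph.v12i_le_left g₁ g₃)
        have h23 : ¬(g₂.verts = ∅ ∧ g₃.verts = ∅) := by
          intro hc; exact h13 ⟨h12.1, hc.2⟩
        rw [dW, dW, dW, if_pos h12, if_neg h13, if_neg h23, hy, hz]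
        simp
      · by_cases h23 : g₂.verts = ∅ ∧ g₃.verts = ∅
        · have hc2 : g₂.verts.card = 0 := by rw [h23.1]; rfl
          have hx : v12i g₁ g₂ = 0 :=
            Nat.le_zero.1 (hc2 ▸ LGraph.v12i_le_right g₁ g₂)
          have hc3 : g₃.verts.card = 0 := by rw [h23.2]; rfl
          have hz : v12i g₁ g₃ = 0 :=
            Nat.le_zero.1 (hc3 ▸ LGraph.v12i_le_right g₁ g₃)
          rw [dW, dW, dW, if_pos h23, if_neg h13, if_neg h12, hx, hz]
          simp
        · rw [dW, dW, dW, if_neg h12, if_neg h23, if_neg h13]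
          have hkey : (v12i g₁ g₂ : ℝ) + (v12i g₂ g₃ : ℝ) ≤
              (g₂.verts.card : ℝ) + (v12i g₁ g₃ : ℝ) := by
            exact_mod_cast LGraph.v12i_key g₁ g₂ g₃
          exact tri_real _ _ _ _ _ _ (Nat.cast_nonneg _) (Nat.cast_nonneg _)
            (hle1 g₁ g₂) (hle2 g₁ g₂) (hle1 g₂ g₃) (hle2 g₂ g₃) hkey
            (hden g₁ g₂ h12) (hden g₂ g₃ h23) (hden g₁ g₃ h13)
  · -- separation
    intro g₁ g₂ h0
    rw [dW] at h0
    split_ifs at h0 with h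
    · exact LGraph.iso_of_empty h.1 h.2
    · have hd := hden g₁ g₂ h
      have hk : (v12i g₁ g₂ : ℝ) =
          (g₁.verts.card : ℝ) + (g₂.verts.card : ℝ) - (v12i g₁ g₂ : ℝ) := by
        have h1 : (v12i g₁ g₂ : ℝ) /
            ((g₁.verts.card : ℝ) + (g₂.verts.card : ℝ) - (v12i g₁ g₂ : ℝ)) = 1 := by
          linarith
        field_simp at h1
        linarith
      have hkn : 2 * v12i g₁ g₂ = g₁.verts.card + g₂.verts.card := by
        have : (2 * v12i g₁ g₂ : ℝ) = ((g₁.verts.card + g₂.verts.card : ℕ) : ℝ) := by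
          push_cast; linarith
        exact_mod_cast this
      have hk1 : v12i g₁ g₂ = g₁.verts.card := by
        have := LGraph.v12i_le_left g₁ g₂
        have := LGraph.v12i_le_right g₁ g₂
        omega
      have hk2 : v12i g₁ g₂ = g₂.verts.card := by
        have := LGraph.v12i_le_left g₁ g₂
        have := LGraph.v12i_le_right g₁ g₂
        omega
      obtain ⟨h', hi1, hi2, hcard⟩ := LGraph.exists_v12i g₁ g₂
      obtain ⟨a, aind, aiso⟩ := hi1
      obtain ⟨b, bind, biso⟩ := hi2
      have ha : g₁.verts.card ≤ a.verts.card := by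
        rw [aiso.card_eq, hcard, hk1]
      have hb : g₂.verts.card ≤ b.verts.card := by
        rw [biso.card_eq, hcard, hk2]
      have ia : a.Iso g₁ := LGraph.iso_of_induced_card aind ha
      have ib : b.Iso g₂ := LGraph.iso_of_induced_card bind hb
      exact (ia.symm.trans aiso).trans (biso.symm.trans ib)
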